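/- For every n ≥ 1, the projection π induces a bijection between directed animals of area n on the lattice 𝒩, taken up to translation, and pyramids of polymers of total length n, taken up to translation. -/

import Mathlib

/-!
STATEMENT 7: For every `n ≥ 1`, the projection `π` induces a bijection between
directed animals of area `n` on the lattice `𝒩` (up to translation) and pyramids
of polymers of total length `n` (up to translation).

Animals are normalized up to translation by placing the canonical source (the
leftmost site of the bottommost segment) at the origin; pyramids are normalized
up to translation by requiring the minimal polymer to have left endpoint `0`.
The projection relation `Projects A H` says that `H` is obtained as the sequence
of projections of the segments of `A`, listed in weakly increasing height order.
-/

def NSteps : Set (ℤ × ℤ) := {(-1, 0), (-1, 1), (0, 1), (1, 1), (1, 0)}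
def NAdj (v w : ℤ × ℤ) : Prop := (w.1 - v.1, w.2 - v.2) ∈ NSteps
def ReachIn (A : Finset (ℤ × ℤ)) (s t : ℤ × ℤ) : Prop :=
  Relation.ReflTransGen (fun u v => NAdj u v ∧ v ∈ A) s t
def IsDirAnimalFrom (A : Finset (ℤ × ℤ)) (s : ℤ × ℤ) : Prop :=
  s ∈ A ∧ ∀ t ∈ A, ReachIn A s t

/-- `A` is a directed animal, normalized (up to translation) so that its canonical
source, the leftmost site of its bottommost segment, is the origin. -/
def IsNormDirAnimal (A : Finset (ℤ × ℤ)) : Prop :=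
  IsDirAnimalFrom A (0, 0) ∧ ((-1, 0) : ℤ × ℤ) ∉ A

/-- A polymer is a closed real interval `[i,j]` with integer endpoints `i < j`,
encoded by the pair of endpoints. -/
def Polymer : Type := {p : ℤ × ℤ // p.1 < p.2}

/-- The left endpoint of a polymer. -/
def Polymer.left (a : Polymer) : ℤ := a.1.1

/-- The right endpoint of a polymer. -/
def Polymer.right (a : Polymer) : ℤ := a.1.2

/-- The length of a polymer `[i,j]` is `j - i` (a positive integer, recorded in `ℕ`). -/
def Polymer.len (a : Polymer) : ℕ := (a.1.2 - a.1.1).toNat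

/-- Two polymers are concurrent if the closed intervals intersect (even in a point). -/
def Polymer.Concurrent (a b : Polymer) : Prop := a.left ≤ b.right ∧ b.left ≤ a.right

/-- One step of the commutation relation on sequences of polymers:
two adjacent non-concurrent polymers are transposed. -/
def HeapStep (L L' : List Polymer) : Prop :=
  ∃ (l₁ l₂ : List Polymer) (a b : Polymer), ¬ a.Concurrent b ∧
    L = l₁ ++ a :: b :: l₂ ∧ L' = l₁ ++ b :: a :: l₂

/-- A heap of polymers: a finite sequence of polymers up to commutation of
adjacent non-concurrent polymers. -/
def Heap : Type := Quot HeapStep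

/-- The multiset of polymers of a heap. -/
def Heap.toMultiset : Heap → Multiset Polymer :=
  Quot.lift (fun L => (L : Multiset Polymer)) (by
    rintro L L' ⟨l₁, l₂, a, b, -, rfl, rfl⟩
    exact Multiset.coe_eq_coe.mpr (List.Perm.append_left l₁ (List.Perm.swap b a l₂)))

/-- The total length of a heap: the sum of the lengths of its polymers. -/
def Heap.totalLength (H : Heap) : ℕ := (H.toMultiset.map Polymer.len).sum

/-- A polymer `a` is minimal in the heap `H` if `H` can be written `a · H'`. -/
def Heap.IsMinimal (H : Heap) (a : Polymer) : Prop :=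
  ∃ L : List Polymer, H = Quot.mk HeapStep (a :: L)

/-- A pyramid is a heap with a unique minimal polymer. -/
def Heap.IsPyramid (H : Heap) : Prop := ∃! a : Polymer, H.IsMinimal a

/-- Normalization of a pyramid up to translation: its minimal polymer has left
endpoint `0`. -/
def Heap.PyramidNormalized (H : Heap) : Prop :=
  ∃ a : Polymer, H.IsMinimal a ∧ a.left = 0

/-- The projections of the segments of the animal `A`, with their heights:
`(p, k) ∈ SegProj A` iff `{(p.left, k), …, (p.right - 1, k)}` is a maximal set of
horizontally consecutive sites of `A`, projecting to the polymer `[p.left, p.right]`. -/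
def SegProj (A : Finset (ℤ × ℤ)) : Set (Polymer × ℤ) :=
  {q | (q.1.left - 1, q.2) ∉ A ∧ (q.1.right, q.2) ∉ A ∧
       ∀ x : ℤ, q.1.left ≤ x → x < q.1.right → (x, q.2) ∈ A}

/-- `Projects A H`: the heap `H` is the projection `π(A)` of the animal `A`, i.e.
`H` is represented by the list of the projections of all segments of `A`, taken in
weakly increasing order of height. -/
def Projects (A : Finset (ℤ × ℤ)) (H : Heap) : Prop :=
  ∃ L : List (Polymer × ℤ), L.Nodup ∧ (∀ q, q ∈ L ↔ q ∈ SegProj A) ∧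
    L.Chain' (fun q q' => q.2 ≤ q'.2) ∧ H = Quot.mk HeapStep (L.map Prod.fst)


/-!
Drop the polymers of a heap one after the other: each comes to rest one level above the
highest concurrent polymer already placed. The resulting multiset of (polymer, level) pairs is
invariant under commutation of non-concurrent polymers, and it determines the heap, which is
recovered by listing the pairs by increasing level. In such a level multiset, polymers on a
common level are disjoint, and each polymer above level `0` rests on a concurrent one a level
below. The segments of a directed animal, with their heights, form exactly such a configuration,
because a directed path enters every row from a site just below it; conversely the sites of
such a configuration form a directed animal whose segments are the given pairs. Minimal polymers
correspond to segments of height `0`, and area to total length.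
-/

namespace Polymer

instance : DecidableEq Polymer := inferInstanceAs (DecidableEq {p : ℤ × ℤ // p.1 < p.2})

instance (a b : Polymer) : Decidable (a.Concurrent b) := inferInstanceAs (Decidable (_ ∧ _))

theorem left_lt_right (a : Polymer) : a.left < a.right := a.2

theorem ext {a b : Polymer} (hl : a.left = b.left) (hr : a.right = b.right) : a = b :=
  Subtype.ext (Prod.ext hl hr)

theorem Concurrent.symm {a b : Polymer} (h : a.Concurrent b) : b.Concurrent a := ⟨h.2, h.1⟩

theorem concurrent_refl (a : Polymer) : a.Concurrent a := ⟨a.2.le, a.2.le⟩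

end Polymer

def LevelwiseDisjoint (S : Set (Polymer × ℤ)) : Prop :=
  ∀ q ∈ S, ∀ q' ∈ S, q.2 = q'.2 → q.1.Concurrent q'.1 → q = q'

structure IsSupported (S : Set (Polymer × ℤ)) : Prop where
  nonneg : ∀ q ∈ S, 0 ≤ q.2
  exists_support : ∀ q ∈ S, 0 < q.2 → ∃ q' ∈ S, q'.2 = q.2 - 1 ∧ q.1.Concurrent q'.1

theorem pairwise_mergeSort_snd {α : Type*} (l : List (α × ℤ)) :
    (l.mergeSort fun q q' => q.2 ≤ q'.2).Pairwise fun q q' => q.2 ≤ q'.2 := by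
  have := List.pairwise_mergeSort (le := fun q q' : α × ℤ => decide (q.2 ≤ q'.2))
    (fun _ _ _ h₁ h₂ => by simp only [decide_eq_true_eq] at *; omega)
    (fun _ _ => by simp only [Bool.or_eq_true, decide_eq_true_eq]; omega) l
  simpa only [decide_eq_true_eq] using this

section Settling

/-- The level at which `p` comes to rest when dropped onto the placed polymers `s`. -/
def restLevel (p : Polymer) (s : Multiset (Polymer × ℤ)) : ℕ :=
  ((s.filter fun q => p.Concurrent q.1).map fun q => q.2.toNat + 1).sup

variable {p : Polymer} {s : Multiset (Polymer × ℤ)}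

theorem le_restLevel {q : Polymer × ℤ} (hq : q ∈ s) (hc : p.Concurrent q.1) :
    q.2.toNat + 1 ≤ restLevel p s :=
  Multiset.le_sup (Multiset.mem_map_of_mem _ (Multiset.mem_filter.2 ⟨hq, hc⟩))

theorem restLevel_le {n : ℕ} (h : ∀ q ∈ s, p.Concurrent q.1 → q.2.toNat + 1 ≤ n) :
    restLevel p s ≤ n :=
  Multiset.sup_le.2 fun _ hb => by
    obtain ⟨q, hq, rfl⟩ := Multiset.mem_map.1 hb
    exact h q (Multiset.mem_filter.1 hq).1 (Multiset.mem_filter.1 hq).2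

theorem restLevel_add_of_not_concurrent {t : Multiset (Polymer × ℤ)}
    (hs : ∀ q ∈ s, ¬ p.Concurrent q.1) : restLevel p (s + t) = restLevel p t := by
  rw [restLevel, Multiset.filter_add, Multiset.filter_eq_nil.2 hs, zero_add]
  rfl

theorem exists_of_restLevel_eq_succ {n : ℕ} (h : restLevel p s = n + 1) :
    ∃ q ∈ s, p.Concurrent q.1 ∧ q.2.toNat = n := by
  have hne : s.filter (fun q => p.Concurrent q.1) ≠ 0 := by
    intro h0
    simp [restLevel, h0] at h
  obtain ⟨q, hq, hmax⟩ := Multiset.exists_max_image (fun q : Polymer × ℤ => q.2.toNat) hne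
  rw [Multiset.mem_filter] at hq
  have hge := le_restLevel hq.1 hq.2
  have hle : restLevel p s ≤ q.2.toNat + 1 :=
    restLevel_le fun r hr hc => Nat.succ_le_succ (hmax r (Multiset.mem_filter.2 ⟨hr, hc⟩))
  exact ⟨q, hq.1, hq.2, by omega⟩

def settle (acc : Multiset (Polymer × ℤ)) : List Polymer → List (Polymer × ℤ)
  | [] => []
  | p :: L => (p, restLevel p acc) :: settle ((p, restLevel p acc) ::ₘ acc) L

@[simp]
theorem map_fst_settle (acc : Multiset (Polymer × ℤ)) (L : List Polymer) :
    (settle acc L).map Prod.fst = L := by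
  induction L generalizing acc with
  | nil => rfl
  | cons p L ih => simp [settle, ih]

theorem add_coe_cons (acc : Multiset (Polymer × ℤ)) (q : Polymer × ℤ) (M : List (Polymer × ℤ)) :
    acc + ↑(q :: M) = q ::ₘ acc + ↑M := by
  rw [← Multiset.cons_coe, Multiset.add_cons, Multiset.cons_add]

theorem snd_eq_restLevel_of_settle_eq {acc : Multiset (Polymer × ℤ)} {L : List Polymer}
    {M₁ M₂ : List (Polymer × ℤ)} {q : Polymer × ℤ} (h : settle acc L = M₁ ++ q :: M₂) :
    q.2 = restLevel q.1 (acc + M₁) := by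
  induction L generalizing acc M₁ with
  | nil => simp [settle] at h
  | cons p L ih =>
    rw [settle] at h
    cases M₁ with
    | nil =>
      obtain ⟨rfl, -⟩ := List.cons_eq_cons.1 h
      simp
    | cons x M₁ =>
      simp only [List.cons_append, List.cons.injEq] at h
      obtain ⟨rfl, h⟩ := h
      rw [ih h, add_coe_cons]

theorem settle_eq_of_forall_snd_eq_restLevel {acc : Multiset (Polymer × ℤ)}
    {M : List (Polymer × ℤ)}
    (h : ∀ (M₁ : List (Polymer × ℤ)) (q : Polymer × ℤ) (M₂ : List (Polymer × ℤ)),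
      M = M₁ ++ q :: M₂ → q.2 = restLevel q.1 (acc + M₁)) :
    settle acc (M.map Prod.fst) = M := by
  induction M generalizing acc with
  | nil => rfl
  | cons q M ih =>
    have hq : (q.1, (restLevel q.1 acc : ℤ)) = q :=
      Prod.ext rfl (by simpa using (h [] q M rfl).symm)
    rw [List.map_cons, settle, hq,
      ih fun M₁ r M₂ hM => by rw [h (q :: M₁) r M₂ (by rw [hM]; rfl), add_coe_cons]]

theorem snd_nonneg_of_mem_settle {acc : Multiset (Polymer × ℤ)} {L : List Polymer}
    {q : Polymer × ℤ} (hq : q ∈ settle acc L) : 0 ≤ q.2 := by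
  obtain ⟨M₁, M₂, h⟩ := List.append_of_mem hq
  rw [snd_eq_restLevel_of_settle_eq h]
  exact Int.natCast_nonneg _

theorem pairwise_settle (acc : Multiset (Polymer × ℤ)) (L : List Polymer) :
    (settle acc L).Pairwise fun q q' => q'.1.Concurrent q.1 → q.2 < q'.2 := by
  induction L generalizing acc with
  | nil => exact List.Pairwise.nil
  | cons p L ih =>
    refine List.Pairwise.cons (fun q hq hc => ?_) (ih _)
    obtain ⟨M₁, M₂, h⟩ := List.append_of_mem hq
    have := le_restLevel (s := (p, (restLevel p acc : ℤ)) ::ₘ acc + M₁)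
      (Multiset.mem_add.2 (Or.inl (Multiset.mem_cons_self _ _))) hc
    rw [snd_eq_restLevel_of_settle_eq h]
    simp only [Int.toNat_natCast] at this
    omega

theorem nodup_settle (acc : Multiset (Polymer × ℤ)) (L : List Polymer) :
    (settle acc L).Nodup :=
  (pairwise_settle acc L).imp fun h heq => by
    subst heq
    exact lt_irrefl _ (h (Polymer.concurrent_refl _))

theorem settle_perm_of_heapStep {L L' : List Polymer} (h : HeapStep L L')
    (acc : Multiset (Polymer × ℤ)) : (settle acc L).Perm (settle acc L') := by
  obtain ⟨l₁, l₂, a, b, hab, rfl, rfl⟩ := h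
  induction l₁ generalizing acc with
  | cons x l₁ ih => exact (ih _).cons _
  | nil =>
    have hb : restLevel b ((a, restLevel a acc) ::ₘ acc) = restLevel b acc := by
      rw [← Multiset.singleton_add]
      exact restLevel_add_of_not_concurrent (by simpa using fun h => hab h.symm)
    have ha : restLevel a ((b, restLevel b acc) ::ₘ acc) = restLevel a acc := by
      rw [← Multiset.singleton_add]
      exact restLevel_add_of_not_concurrent (by simpa using hab)
    simp only [List.nil_append, settle, hb, ha, Multiset.cons_swap (b, _)]
    exact List.Perm.swap _ _ _

end Settling

theorem LevelwiseDisjoint.settle_map_fst {M : List (Polymer × ℤ)}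
    (hdisj : LevelwiseDisjoint {q | q ∈ M}) (hsupp : IsSupported {q | q ∈ M}) (hnd : M.Nodup)
    (hsort : M.Pairwise fun q q' => q.2 ≤ q'.2) : settle 0 (M.map Prod.fst) = M := by
  refine settle_eq_of_forall_snd_eq_restLevel fun M₁ q M₂ hM => ?_
  subst hM
  rw [zero_add]
  obtain ⟨-, hsort₂, hsort₁₂⟩ := List.pairwise_append.1 hsort
  have hq : q ∈ M₁ ++ q :: M₂ := by simp
  have hqM₁ : q ∉ M₁ := fun h => (List.nodup_append.1 hnd).2.2 q h q (by simp) rfl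
  have hle : restLevel q.1 M₁ ≤ q.2.toNat := restLevel_le fun x hx hc => by
    have hxM : x ∈ M₁ ++ q :: M₂ := List.mem_append_left _ hx
    have hne : x.2 ≠ q.2 := fun he => hqM₁ (hdisj x hxM q hq he hc.symm ▸ hx)
    have := hsort₁₂ x hx q (by simp)
    have := hsupp.nonneg x hxM
    omega
  have hge : q.2.toNat ≤ restLevel q.1 M₁ := by
    rcases (hsupp.nonneg q hq).eq_or_lt with h0 | hpos
    · simp [← h0]
    obtain ⟨q', hq', hlev, hc⟩ := hsupp.exists_support q hq hpos
    have hq'M₁ : q' ∈ M₁ := by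
      rcases List.mem_append.1 hq' with h | h
      · exact h
      · have := (List.pairwise_cons.1 hsort₂).1
        rcases List.mem_cons.1 h with rfl | h
        · omega
        · have := this q' h; omega
    have := le_restLevel (Multiset.mem_coe.2 hq'M₁) hc
    omega
  have := hsupp.nonneg q hq
  omega

namespace Heap

def levelsOn (acc : Multiset (Polymer × ℤ)) : Heap → Multiset (Polymer × ℤ) :=
  Quot.lift (fun L => (settle acc L : Multiset (Polymer × ℤ))) fun _ _ h =>
    Multiset.coe_eq_coe.2 (settle_perm_of_heapStep h acc)

@[simp]
theorem levelsOn_mk (acc : Multiset (Polymer × ℤ)) (L : List Polymer) :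
    levelsOn acc (Quot.mk HeapStep L) = settle acc L := rfl

theorem nodup_levelsOn (H : Heap) : (levelsOn 0 H).Nodup := by
  induction H using Quot.ind with | mk L =>
  exact nodup_settle 0 L

theorem levelwiseDisjoint_levelsOn (H : Heap) : LevelwiseDisjoint {q | q ∈ levelsOn 0 H} := by
  induction H using Quot.ind with | mk L =>
  have : Std.Symm fun q q' : Polymer × ℤ => q.2 = q'.2 → ¬ q.1.Concurrent q'.1 :=
    ⟨fun _ _ h he hc => h he.symm hc.symm⟩
  have hpw := (pairwise_settle 0 L).imp
    fun {q q'} h (he : q.2 = q'.2) (hc : q.1.Concurrent q'.1) => (h hc.symm).ne he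
  intro q hq q' hq' he hc
  by_contra hne
  exact hpw.forall hq hq' hne he hc

theorem isSupported_levelsOn (H : Heap) : IsSupported {q | q ∈ levelsOn 0 H} := by
  induction H using Quot.ind with | mk L =>
  refine ⟨fun _ => snd_nonneg_of_mem_settle, fun q hq hpos => ?_⟩
  obtain ⟨M₁, M₂, h⟩ := List.append_of_mem hq
  have hq2 := snd_eq_restLevel_of_settle_eq h
  rw [zero_add] at hq2
  obtain ⟨q', hq', hc, hlev⟩ :=
    exists_of_restLevel_eq_succ (p := q.1) (s := M₁) (n := q.2.toNat - 1) (by omega)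
  have hq'M : q' ∈ settle 0 L := by rw [h]; exact List.mem_append_left _ hq'
  have := snd_nonneg_of_mem_settle hq'M
  exact ⟨q', hq'M, by omega, hc⟩

theorem heapStep_cons (a : Polymer) {L L' : List Polymer} (h : HeapStep L L') :
    HeapStep (a :: L) (a :: L') := by
  obtain ⟨l₁, l₂, b, c, hbc, rfl, rfl⟩ := h
  exact ⟨a :: l₁, l₂, b, c, hbc, rfl, rfl⟩

theorem mk_cons_eq_mk_cons (a : Polymer) {L L' : List Polymer}
    (h : (Quot.mk HeapStep L : Heap) = Quot.mk HeapStep L') :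
    (Quot.mk HeapStep (a :: L) : Heap) = Quot.mk HeapStep (a :: L') :=
  congrArg (Quot.map (a :: ·) fun _ _ => heapStep_cons a) h

theorem mk_append_cons_eq_mk_cons {p : Polymer} {l₁ : List Polymer} (l₂ : List Polymer)
    (h : ∀ b ∈ l₁, ¬ p.Concurrent b) :
    (Quot.mk HeapStep (l₁ ++ p :: l₂) : Heap) = Quot.mk HeapStep (p :: (l₁ ++ l₂)) := by
  induction l₁ with
  | nil => rfl
  | cons a l₁ ih =>
    rw [List.forall_mem_cons] at h
    refine (mk_cons_eq_mk_cons a (ih h.2)).trans (Quot.sound ?_)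
    exact ⟨[], l₁ ++ l₂, a, p, fun hc => h.1 hc.symm, rfl, rfl⟩

theorem isMinimal_iff {H : Heap} {p : Polymer} : H.IsMinimal p ↔ (p, 0) ∈ levelsOn 0 H := by
  constructor
  · rintro ⟨L, rfl⟩
    simp [settle, restLevel]
  · intro hp
    induction H using Quot.ind with | mk L =>
    obtain ⟨M₁, M₂, h⟩ := List.append_of_mem (Multiset.mem_coe.1 hp)
    have hlev : restLevel p M₁ = 0 := by simpa using (snd_eq_restLevel_of_settle_eq h).symm
    have hL : L = M₁.map Prod.fst ++ p :: M₂.map Prod.fst := by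
      simpa using congrArg (List.map Prod.fst) h
    refine ⟨M₁.map Prod.fst ++ M₂.map Prod.fst, hL ▸ mk_append_cons_eq_mk_cons _ ?_⟩
    simp only [List.mem_map]
    rintro _ ⟨x, hx, rfl⟩ hc
    have := le_restLevel (Multiset.mem_coe.2 hx) hc
    omega

theorem totalLength_eq (H : Heap) : H.totalLength = ((levelsOn 0 H).map fun q => q.1.len).sum := by
  induction H using Quot.ind with | mk L =>
  simp only [totalLength, toMultiset, levelsOn_mk, Multiset.map_coe, Multiset.sum_coe]
  conv_lhs => rw [← map_fst_settle 0 L]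
  rw [List.map_map]
  rfl

/-- A heap is recovered from its levels by listing the polymers by increasing level. -/
theorem mk_eq_mk_of_perm {acc : Multiset (Polymer × ℤ)} {L : List Polymer}
    {M : List (Polymer × ℤ)} (hsort : M.Pairwise fun q q' => q.2 ≤ q'.2)
    (hM : settle acc (M.map Prod.fst) = M) (hperm : (settle acc L).Perm M) :
    (Quot.mk HeapStep L : Heap) = Quot.mk HeapStep (M.map Prod.fst) := by
  induction M generalizing acc L with
  | nil =>
    obtain rfl : L = [] := by
      simpa using congrArg (List.map Prod.fst) (List.Perm.nil_eq hperm.symm).symm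
    rfl
  | cons q M ih =>
    rw [List.pairwise_cons] at hsort
    simp only [List.map_cons, settle, List.cons.injEq] at hM
    obtain ⟨hq, hM⟩ := hM
    rw [hq] at hM
    obtain ⟨P₁, P₂, hsplit⟩ := List.append_of_mem (hperm.symm.subset List.mem_cons_self)
    have hlev := snd_eq_restLevel_of_settle_eq hsplit
    have hnc : ∀ x ∈ P₁, ¬ q.1.Concurrent x.1 := by
      intro x hx hc
      have hxL : x ∈ settle acc L := by rw [hsplit]; exact List.mem_append_left _ hx
      have hqx : q.2 ≤ x.2 := by
        rcases List.mem_cons.1 (hperm.subset hxL) with rfl | h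
        · exact le_rfl
        · exact hsort.1 x h
      have := le_restLevel (s := acc + P₁) (Multiset.mem_add.2 (Or.inr (Multiset.mem_coe.2 hx))) hc
      have := snd_nonneg_of_mem_settle hxL
      omega
    have hL : L = P₁.map Prod.fst ++ q.1 :: P₂.map Prod.fst := by
      simpa using congrArg (List.map Prod.fst) hsplit
    have hbubble : (Quot.mk HeapStep L : Heap) =
        Quot.mk HeapStep (q.1 :: (P₁.map Prod.fst ++ P₂.map Prod.fst)) := by
      rw [hL]
      exact mk_append_cons_eq_mk_cons _ (by simpa using hnc)
    have hrest : (settle (q ::ₘ acc) (P₁.map Prod.fst ++ P₂.map Prod.fst)).Perm M := by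
      have := Multiset.coe_eq_coe.1 (congrArg (levelsOn acc) hbubble)
      rw [settle, hq] at this
      exact (this.symm.trans hperm).cons_inv
    exact hbubble.trans (mk_cons_eq_mk_cons q.1 (ih hsort.2 hM hrest))

theorem eq_of_levelsOn_eq {H H' : Heap} (h : levelsOn 0 H = levelsOn 0 H') : H = H' := by
  induction H using Quot.ind with | mk L =>
  induction H' using Quot.ind with | mk L' =>
  set M := (settle 0 L).mergeSort fun q q' => q.2 ≤ q'.2
  have hperm : (settle 0 L).Perm M := (List.mergeSort_perm _ _).symm
  have hsort := pairwise_mergeSort_snd (settle 0 L)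
  have hmem : {q | q ∈ M} = {q | q ∈ levelsOn 0 (Quot.mk HeapStep L)} :=
    Set.ext fun _ => hperm.mem_iff.symm
  have hM : settle 0 (M.map Prod.fst) = M :=
    LevelwiseDisjoint.settle_map_fst (hmem ▸ levelwiseDisjoint_levelsOn _)
      (hmem ▸ isSupported_levelsOn _) (hperm.nodup_iff.1 (nodup_settle 0 L)) hsort
  rw [mk_eq_mk_of_perm hsort hM hperm,
    mk_eq_mk_of_perm hsort hM ((Multiset.coe_eq_coe.1 h).symm.trans hperm)]

end Heap

theorem nAdj_iff {v w : ℤ × ℤ} : NAdj v w ↔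
    w.2 = v.2 ∧ (w.1 = v.1 + 1 ∨ w.1 = v.1 - 1) ∨
      w.2 = v.2 + 1 ∧ v.1 - 1 ≤ w.1 ∧ w.1 ≤ v.1 + 1 := by
  simp only [NAdj, NSteps, Set.mem_insert_iff, Set.mem_singleton_iff, Prod.mk.injEq]
  omega

theorem reachIn_of_row {A : Finset (ℤ × ℤ)} {k l r : ℤ} (hrow : ∀ x, l ≤ x → x < r → (x, k) ∈ A)
    {a b : ℤ} (ha : l ≤ a) (ha' : a < r) (hb : l ≤ b) (hb' : b < r) :
    ReachIn A (a, k) (b, k) := by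
  rcases le_total a b with hab | hab
  · induction b, hab using Int.leInduction with
    | base => exact .refl
    | succ b hab ih =>
      exact (ih (by omega) (by omega)).tail ⟨nAdj_iff.2 (by omega), hrow _ (by omega) hb'⟩
  · induction b, hab using Int.leInductionDown with
    | base => exact .refl
    | pred b hab ih =>
      exact (ih (by omega) (by omega)).tail ⟨nAdj_iff.2 (by omega), hrow _ hb (by omega)⟩

namespace ReachIn

variable {A : Finset (ℤ × ℤ)} {s t : ℤ × ℤ}

theorem mem (h : ReachIn A s t) (hs : s ∈ A) : t ∈ A := by
  induction h with
  | refl => exact hs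
  | tail _ hstep => exact hstep.2

theorem snd_le (h : ReachIn A s t) : s.2 ≤ t.2 := by
  induction h with
  | refl => exact le_rfl
  | tail _ hstep ih => have := nAdj_iff.1 hstep.1; omega

theorem exists_row_entry (h : ReachIn A s t) (hs : s ∈ A) :
    ∃ u : ℤ × ℤ, (u = s ∨ ∃ w, ReachIn A s w ∧ w.2 + 1 = t.2 ∧ w.1 - 1 ≤ u.1 ∧ u.1 ≤ w.1 + 1) ∧
      u.2 = t.2 ∧ ∀ x, min u.1 t.1 ≤ x → x ≤ max u.1 t.1 → (x, t.2) ∈ A := by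
  induction h with
  | refl =>
    refine ⟨s, Or.inl rfl, rfl, fun x h₁ h₂ => ?_⟩
    obtain rfl : x = s.1 := by omega
    exact hs
  | @tail v t hsv hstep ih =>
    obtain ⟨u, hu, hu2, hrow⟩ := ih
    rcases nAdj_iff.1 hstep.1 with ⟨ht2, ht1⟩ | ⟨ht2, ht1⟩
    · refine ⟨u, ?_, by omega, fun x h₁ h₂ => ?_⟩
      · rcases hu with rfl | ⟨w, hw, hw2, hw1⟩
        · exact Or.inl rfl
        · exact Or.inr ⟨w, hw, by omega, hw1⟩
      · by_cases hx : x = t.1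
        · exact hx ▸ hstep.2
        · rw [ht2]
          exact hrow x (by omega) (by omega)
    · refine ⟨t, Or.inr ⟨v, hsv, by omega, by omega, by omega⟩, rfl, fun x h₁ h₂ => ?_⟩
      obtain rfl : x = t.1 := by omega
      exact hstep.2

end ReachIn

theorem levelwiseDisjoint_segProj (A : Finset (ℤ × ℤ)) : LevelwiseDisjoint (SegProj A) := by
  rintro ⟨p, k⟩ ⟨hL, hR, hrow⟩ ⟨p', k'⟩ ⟨hL', hR', hrow'⟩ (rfl : k = k') ⟨hc₁, hc₂⟩
  dsimp only at *
  have := p.left_lt_right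
  have := p'.left_lt_right
  have h₁ : ¬ p'.left < p.left := fun h => hL (hrow' _ (by omega) (by omega))
  have h₂ : ¬ p.left < p'.left := fun h => hL' (hrow _ (by omega) (by omega))
  have h₃ : ¬ p.right < p'.right := fun h => hR (hrow' _ (by omega) h)
  have h₄ : ¬ p'.right < p.right := fun h => hR' (hrow _ (by omega) h)
  exact Prod.ext (Polymer.ext (show p.left = p'.left by omega) (show p.right = p'.right by omega))
    rfl

theorem exists_segProj {A : Finset (ℤ × ℤ)} {t : ℤ × ℤ} (ht : t ∈ A) :
    ∃ q ∈ SegProj A, q.2 = t.2 ∧ q.1.left ≤ t.1 ∧ t.1 < q.1.right := by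
  obtain ⟨B, hB⟩ := (A.image fun v => max v.1 (-v.1)).exists_le
  have hbound : ∀ v ∈ A, v.1 ≤ B ∧ -v.1 ≤ B := fun v hv => by
    have := hB _ (Finset.mem_image_of_mem _ hv)
    omega
  obtain ⟨r, ⟨htr, hr⟩, hrmin⟩ := Int.exists_least_of_bdd (P := fun x => t.1 < x ∧ (x, t.2) ∉ A)
    ⟨t.1, fun _ hz => hz.1.le⟩ ⟨B + 1, by have := hbound t ht; omega, fun h => by
      have := hbound _ h; simp only at this; omega⟩
  obtain ⟨l, ⟨hlt, hl⟩, hlmax⟩ := Int.exists_greatest_of_bdd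
    (P := fun x => x < t.1 ∧ (x, t.2) ∉ A)
    ⟨t.1, fun _ hz => hz.1.le⟩ ⟨-B - 1, by have := hbound t ht; omega, fun h => by
      have := hbound _ h; simp only at this; omega⟩
  refine ⟨(⟨(l + 1, r), by omega⟩, t.2), ⟨by simpa [Polymer.left] using hl, hr, fun x h₁ h₂ => ?_⟩,
    rfl, by simp only [Polymer.left]; omega, htr⟩
  simp only [Polymer.left, Polymer.right] at h₁ h₂
  by_contra hx
  rcases lt_trichotomy x t.1 with h | rfl | h
  · have := hlmax x ⟨h, hx⟩; omega
  · exact hx ht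
  · have := hrmin x ⟨h, hx⟩; omega

theorem segProj_finite (A : Finset (ℤ × ℤ)) : (SegProj A).Finite := by
  refine Set.Finite.of_finite_image (f := fun q => (q.1.left, q.2)) (A.finite_toSet.subset ?_) ?_
  · rintro _ ⟨q, hq, rfl⟩
    exact hq.2.2 _ le_rfl q.1.left_lt_right
  · intro q hq q' hq' h
    simp only [Prod.mk.injEq] at h
    have := q.1.left_lt_right
    have := q'.1.left_lt_right
    exact levelwiseDisjoint_segProj A q hq q' hq' h.2 ⟨by omega, by omega⟩

noncomputable def segments (A : Finset (ℤ × ℤ)) : Finset (Polymer × ℤ) :=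
  (segProj_finite A).toFinset

theorem coe_segments (A : Finset (ℤ × ℤ)) : (↑(segments A) : Set (Polymer × ℤ)) = SegProj A :=
  Set.Finite.coe_toFinset _

theorem mem_segments {A : Finset (ℤ × ℤ)} {q : Polymer × ℤ} : q ∈ segments A ↔ q ∈ SegProj A :=
  Set.Finite.mem_toFinset _

noncomputable def segmentSites (q : Polymer × ℤ) : Finset (ℤ × ℤ) :=
  (Finset.Ico q.1.left q.1.right).image fun x => (x, q.2)

theorem mem_segmentSites {q : Polymer × ℤ} {v : ℤ × ℤ} :
    v ∈ segmentSites q ↔ q.1.left ≤ v.1 ∧ v.1 < q.1.right ∧ v.2 = q.2 := by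
  simp only [segmentSites, Finset.mem_image, Finset.mem_Ico]
  constructor
  · rintro ⟨x, hx, rfl⟩
    exact ⟨hx.1, hx.2, rfl⟩
  · rintro ⟨h₁, h₂, h₃⟩
    exact ⟨v.1, ⟨h₁, h₂⟩, by rw [← h₃]⟩

theorem card_segmentSites (q : Polymer × ℤ) : (segmentSites q).card = q.1.len := by
  rw [segmentSites, Finset.card_image_of_injective _ fun x y h => congrArg Prod.fst h, Int.card_Ico]
  rfl

noncomputable def sites (S : Finset (Polymer × ℤ)) : Finset (ℤ × ℤ) := S.biUnion segmentSites

theorem mem_sites {S : Finset (Polymer × ℤ)} {v : ℤ × ℤ} :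
    v ∈ sites S ↔ ∃ q ∈ S, v ∈ segmentSites q :=
  Finset.mem_biUnion

theorem mem_sites_of_mem {S : Finset (Polymer × ℤ)} {q : Polymer × ℤ} (hq : q ∈ S) {x : ℤ}
    (h₁ : q.1.left ≤ x) (h₂ : x < q.1.right) : (x, q.2) ∈ sites S :=
  mem_sites.2 ⟨q, hq, mem_segmentSites.2 ⟨h₁, h₂, rfl⟩⟩

theorem sites_segments (A : Finset (ℤ × ℤ)) : sites (segments A) = A := by
  ext v
  rw [mem_sites]
  constructor
  · rintro ⟨q, hq, hv⟩
    obtain ⟨h₁, h₂, h₃⟩ := mem_segmentSites.1 hv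
    rw [← Prod.mk.eta (p := v), h₃]
    exact (mem_segments.1 hq).2.2 v.1 h₁ h₂
  · intro hv
    obtain ⟨q, hq, h₃, h₁, h₂⟩ := exists_segProj hv
    exact ⟨q, mem_segments.2 hq, mem_segmentSites.2 ⟨h₁, h₂, h₃.symm⟩⟩

section Sites

variable {S : Finset (Polymer × ℤ)}

theorem card_sites (hS : LevelwiseDisjoint ↑S) : (sites S).card = ∑ q ∈ S, q.1.len := by
  rw [sites, Finset.card_biUnion]
  · simp only [card_segmentSites]
  · intro q hq q' hq' hne
    refine Finset.disjoint_left.2 fun v hv hv' => hne ?_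
    rw [mem_segmentSites] at hv hv'
    exact hS q hq q' hq' (by omega) ⟨by omega, by omega⟩

theorem mem_segProj_sites (hS : LevelwiseDisjoint ↑S) {q : Polymer × ℤ} (hq : q ∈ S) :
    q ∈ SegProj (sites S) := by
  have := q.1.left_lt_right
  have hgap : ∀ x, q.1.left - 1 ≤ x → x ≤ q.1.right → (x, q.2) ∈ sites S →
      q.1.left ≤ x ∧ x < q.1.right := by
    intro x h₁ h₂ hx
    obtain ⟨q', hq', hv⟩ := mem_sites.1 hx
    obtain ⟨h₁', h₂', h₃'⟩ := mem_segmentSites.1 hv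
    obtain rfl : q' = q := hS q' hq' q hq h₃'.symm ⟨by omega, by omega⟩
    exact ⟨h₁', h₂'⟩
  refine ⟨fun h => ?_, fun h => ?_, fun x h₁ h₂ => mem_sites_of_mem hq h₁ h₂⟩
  · have := hgap _ le_rfl (by omega) h
    omega
  · have := hgap _ (by omega) le_rfl h
    omega

theorem segProj_sites (hS : LevelwiseDisjoint ↑S) : SegProj (sites S) = ↑S := by
  ext q
  refine ⟨fun h => ?_, mem_segProj_sites hS⟩
  obtain ⟨q', hq', hv⟩ := mem_sites.1 (h.2.2 _ le_rfl q.1.left_lt_right)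
  obtain ⟨h₁, h₂, h₃⟩ := mem_segmentSites.1 hv
  have := q.1.left_lt_right
  rwa [levelwiseDisjoint_segProj _ q h q' (mem_segProj_sites hS hq') h₃ ⟨by omega, by omega⟩]

theorem segments_sites (hS : LevelwiseDisjoint ↑S) : segments (sites S) = S :=
  Finset.coe_injective (by rw [coe_segments, segProj_sites hS])

theorem reachIn_sites (hS : IsSupported ↑S) (hleft : ∀ q ∈ S, q.2 = 0 → q.1.left = 0)
    {q : Polymer × ℤ} (hq : q ∈ S) {x : ℤ} (h₁ : q.1.left ≤ x) (h₂ : x < q.1.right) :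
    ReachIn (sites S) (0, 0) (x, q.2) := by
  obtain ⟨n, hn⟩ := Int.eq_ofNat_of_zero_le (hS.nonneg q hq)
  induction n generalizing q x with
  | zero =>
    have hq0 : q.2 = 0 := hn
    have := hleft q hq hq0
    have := q.1.left_lt_right
    rw [hq0]
    exact reachIn_of_row (fun y h₁ h₂ => hq0 ▸ mem_sites_of_mem hq h₁ h₂) (by omega) (by omega)
      h₁ h₂
  | succ n ih =>
    obtain ⟨q', hq', hlev, hc₁, hc₂⟩ := hS.exists_support q hq (by omega)
    have := q.1.left_lt_right
    have := q'.1.left_lt_right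
    -- sites of `q'` and `q` at horizontal distance at most one, which exist by concurrency
    set x' := max q'.1.left (min (q'.1.right - 1) q.1.left)
    set x'' := max q.1.left (min (q.1.right - 1) x')
    have hbelow := ih hq' (x := x') (by omega) (by omega) (by omega)
    have hstep : ReachIn (sites S) (x', q'.2) (x'', q.2) :=
      .single ⟨nAdj_iff.2 (by omega), mem_sites_of_mem hq (by omega) (by omega)⟩
    exact hbelow.trans (hstep.trans
      (reachIn_of_row (fun y => mem_sites_of_mem hq) (by omega) (by omega) h₁ h₂))

theorem isNormDirAnimal_sites (hS : IsSupported ↑S) (hground : ∃ q ∈ S, q.2 = 0)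
    (hleft : ∀ q ∈ S, q.2 = 0 → q.1.left = 0) : IsNormDirAnimal (sites S) := by
  obtain ⟨q₀, hq₀, h0⟩ := hground
  have := q₀.1.left_lt_right
  have := hleft q₀ hq₀ h0
  refine ⟨⟨by simpa [h0] using mem_sites_of_mem hq₀ (x := 0) (by omega) (by omega), ?_⟩, ?_⟩
  · intro t ht
    obtain ⟨q, hq, hv⟩ := mem_sites.1 ht
    obtain ⟨h₁, h₂, h₃⟩ := mem_segmentSites.1 hv
    rw [← Prod.mk.eta (p := t), h₃]
    exact reachIn_sites hS hleft hq h₁ h₂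
  · intro h
    obtain ⟨q, hq, hv⟩ := mem_sites.1 h
    obtain ⟨h₁, -, h₃⟩ := mem_segmentSites.1 hv
    have := hleft q hq h₃.symm
    simp only at h₁
    omega

end Sites

namespace IsNormDirAnimal

variable {A : Finset (ℤ × ℤ)}

theorem reachIn_left (hA : IsNormDirAnimal A) {q : Polymer × ℤ} (hq : q ∈ SegProj A) :
    ReachIn A (0, 0) (q.1.left, q.2) :=
  hA.1.2 _ (hq.2.2 _ le_rfl q.1.left_lt_right)

theorem exists_ground (hA : IsNormDirAnimal A) : ∃ p, (p, 0) ∈ SegProj A := by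
  obtain ⟨q, hq, h0, -⟩ := exists_segProj hA.1.1
  exact ⟨q.1, by rwa [← Prod.mk.eta (p := q), h0] at hq⟩

theorem left_eq_zero (hA : IsNormDirAnimal A) {q : Polymer × ℤ} (hq : q ∈ SegProj A)
    (h0 : q.2 = 0) : q.1.left = 0 := by
  obtain ⟨u, hu, -, hrow⟩ := (hA.reachIn_left hq).exists_row_entry hA.1.1
  rcases hu with rfl | ⟨w, hw, hw2, -⟩
  · simp only [h0] at hrow
    rcases lt_trichotomy q.1.left 0 with h | h | h
    · exact absurd (hrow (-1) (by omega) (by omega)) hA.2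
    · exact h
    · exact absurd (h0 ▸ hrow (q.1.left - 1) (by omega) (by omega)) hq.1
  · have := hw.snd_le
    simp only at this hw2
    omega

theorem isSupported (hA : IsNormDirAnimal A) : IsSupported (SegProj A) where
  nonneg q hq := by simpa using (hA.reachIn_left hq).snd_le
  exists_support q hq hpos := by
    obtain ⟨u, hu, hu2, hrow⟩ := (hA.reachIn_left hq).exists_row_entry hA.1.1
    rcases hu with rfl | ⟨w, hw, hw2, hw₁, hw₂⟩
    · simp only at hu2
      omega
    have := q.1.left_lt_right
    have hu₁ : q.1.left ≤ u.1 := by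
      by_contra h
      exact hq.1 (hrow _ (by omega) (by omega))
    have hu₂ : u.1 < q.1.right := by
      by_contra h
      exact hq.2.1 (hrow _ (by omega) (by omega))
    obtain ⟨q', hq', h₃, h₁, h₂⟩ := exists_segProj (hw.mem hA.1.1)
    exact ⟨q', hq', by omega, by omega, by omega⟩

end IsNormDirAnimal

noncomputable def segList (A : Finset (ℤ × ℤ)) : List (Polymer × ℤ) :=
  (segments A).toList.mergeSort fun q q' => q.2 ≤ q'.2

theorem mem_segList {A : Finset (ℤ × ℤ)} {q : Polymer × ℤ} : q ∈ segList A ↔ q ∈ SegProj A := by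
  rw [segList, List.mem_mergeSort, Finset.mem_toList, mem_segments]

theorem nodup_segList (A : Finset (ℤ × ℤ)) : (segList A).Nodup :=
  (List.mergeSort_perm _ _).nodup_iff.2 (Finset.nodup_toList _)

noncomputable def projection (A : Finset (ℤ × ℤ)) : Heap :=
  Quot.mk HeapStep ((segList A).map Prod.fst)

theorem projects_projection (A : Finset (ℤ × ℤ)) : Projects A (projection A) :=
  ⟨segList A, nodup_segList A, fun _ => mem_segList, (pairwise_mergeSort_snd _).isChain, rfl⟩

namespace IsNormDirAnimal

variable {A : Finset (ℤ × ℤ)}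

theorem levelsOn_projection (hA : IsNormDirAnimal A) :
    Heap.levelsOn 0 (projection A) = (segments A).val := by
  have hmem : {q | q ∈ segList A} = SegProj A := Set.ext fun _ => mem_segList
  rw [projection, Heap.levelsOn_mk,
    LevelwiseDisjoint.settle_map_fst (hmem ▸ levelwiseDisjoint_segProj A) (hmem ▸ hA.isSupported)
      (nodup_segList A) (pairwise_mergeSort_snd _),
    segList, Multiset.coe_eq_coe.2 (List.mergeSort_perm _ _), Finset.coe_toList]

theorem isMinimal_projection_iff (hA : IsNormDirAnimal A) {p : Polymer} :
    (projection A).IsMinimal p ↔ (p, 0) ∈ SegProj A := by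
  rw [Heap.isMinimal_iff, hA.levelsOn_projection, Finset.mem_val, mem_segments]

theorem isPyramid_projection (hA : IsNormDirAnimal A) : (projection A).IsPyramid := by
  obtain ⟨p₀, hp₀⟩ := hA.exists_ground
  refine ⟨p₀, hA.isMinimal_projection_iff.2 hp₀, fun p hp => ?_⟩
  replace hp := hA.isMinimal_projection_iff.1 hp
  have h₁ := hA.left_eq_zero hp rfl
  have h₂ := hA.left_eq_zero hp₀ rfl
  have := p.left_lt_right
  have := p₀.left_lt_right
  exact congrArg Prod.fst (levelwiseDisjoint_segProj A _ hp _ hp₀ rfl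
    ⟨by simp only at *; omega, by simp only at *; omega⟩)

theorem pyramidNormalized_projection (hA : IsNormDirAnimal A) :
    (projection A).PyramidNormalized := by
  obtain ⟨p₀, hp₀⟩ := hA.exists_ground
  exact ⟨p₀, hA.isMinimal_projection_iff.2 hp₀, hA.left_eq_zero hp₀ rfl⟩

theorem totalLength_projection (hA : IsNormDirAnimal A) :
    (projection A).totalLength = A.card := by
  conv_rhs => rw [← sites_segments A]
  rw [Heap.totalLength_eq, hA.levelsOn_projection,
    card_sites (by rw [coe_segments]; exact levelwiseDisjoint_segProj A),
    Finset.sum_eq_multiset_sum]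

theorem eq_of_projection_eq {B : Finset (ℤ × ℤ)} (hA : IsNormDirAnimal A)
    (hB : IsNormDirAnimal B) (h : projection A = projection B) : A = B := by
  have := congrArg (Heap.levelsOn 0) h
  rw [hA.levelsOn_projection, hB.levelsOn_projection, Finset.val_inj] at this
  rw [← sites_segments A, this, sites_segments]

end IsNormDirAnimal

theorem Heap.IsPyramid.exists_projection_eq {H : Heap} (hpyr : H.IsPyramid)
    (hnorm : H.PyramidNormalized) :
    ∃ A, IsNormDirAnimal A ∧ A.card = H.totalLength ∧ projection A = H := by
  set S := (Heap.levelsOn 0 H).toFinset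
  have hS : (↑S : Set (Polymer × ℤ)) = {q | q ∈ Heap.levelsOn 0 H} :=
    Set.ext fun _ => Multiset.mem_toFinset
  have hval : S.val = Heap.levelsOn 0 H := by
    rw [Multiset.toFinset_val, (Heap.nodup_levelsOn H).dedup]
  have hdisj : LevelwiseDisjoint ↑S := hS ▸ Heap.levelwiseDisjoint_levelsOn H
  have hground (p : Polymer) : (p, 0) ∈ S ↔ H.IsMinimal p := by
    rw [Heap.isMinimal_iff, ← hval, Finset.mem_val]
  obtain ⟨p₀, hp₀, huniq⟩ := hpyr
  obtain ⟨a, ha, ha0⟩ := hnorm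
  have hA : IsNormDirAnimal (sites S) := by
    refine isNormDirAnimal_sites (hS ▸ Heap.isSupported_levelsOn H)
      ⟨(p₀, 0), (hground p₀).2 hp₀, rfl⟩ fun q hq h0 => ?_
    obtain ⟨p, rfl⟩ : ∃ p, q = (p, 0) := ⟨q.1, Prod.ext rfl h0⟩
    rw [huniq p ((hground p).1 hq), ← huniq a ha, ha0]
  refine ⟨sites S, hA, ?_, Heap.eq_of_levelsOn_eq ?_⟩
  · rw [card_sites hdisj, Finset.sum_eq_multiset_sum, hval, Heap.totalLength_eq]
  · rw [hA.levelsOn_projection, segments_sites hdisj, hval]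

theorem projection_bijection_directed (n : ℕ) :
    ∃ f : {A : Finset (ℤ × ℤ) // IsNormDirAnimal A ∧ A.card = n} →
          {H : Heap // H.IsPyramid ∧ H.PyramidNormalized ∧ H.totalLength = n},
      Function.Bijective f ∧ ∀ A, Projects A.1 (f A).1 := by
  refine ⟨fun A => ⟨projection A.1, A.2.1.isPyramid_projection,
      A.2.1.pyramidNormalized_projection, A.2.1.totalLength_projection.trans A.2.2⟩,
    ⟨fun A B h => ?_, fun H => ?_⟩, fun A => projects_projection A.1⟩
  · exact Subtype.ext (A.2.1.eq_of_projection_eq B.2.1 (congrArg Subtype.val h))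
  · obtain ⟨A, hA, hcard, hAH⟩ := H.2.1.exists_projection_eq H.2.2.1
    exact ⟨⟨A, hA, hcard.trans H.2.2.2⟩, Subtype.ext hAH⟩
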